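/- arXiv:2007.06112 — 8 statements merged into one kernel-verified Lean document; each statement's English description precedes it below -/
import Mathlib

section
/- Let X be an n-by-n complex matrix with no eigenvalue on the closed negative real axis (-infinity, 0], and let L be the principal logarithm of X, i.e. exp(L) = X and every eigenvalue of L has imaginary part strictly between -pi and pi. If every entry of X is real, then every entry of L is real. -/
/-!
Let `M` be the entrywise conjugate of `L`. Since `X` is real, `exp M = X`, and the spectrum of
`M` is the conjugate of that of `L`, so it also lies in the strip `|Im z| < π`; it remains to see
that two logarithms of `X` with spectrum in this strip coincide. More generally `L Z = Z M` for
every `Z` commuting with `X`. The operator `S Z = L Z - Z M` preserves the commutant of `X`.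
An eigenvector `Z` of `S` there, with eigenvalue `c`, satisfies `L Z = Z (M + c)`, which forces
`e ^ c = 1` and `c = μ - ν` with `μ ∈ σ(L)`, `ν ∈ σ(M)`; injectivity of `exp` on the strip gives
`c = 0`. So `S` is nilpotent on the commutant, and there `S (S Z) = 0` implies `S Z = 0` because
`exp L * Z = (Z + S Z) * exp M`. Hence `S = 0` on the commutant; take `Z = 1`.
-/

open Matrix NormedSpace Polynomial

theorem pow_succ_mul_eq_of_mul_eq_add {R : Type*} [Semiring R] {L M Z W : R}
    (hZ : L * Z = Z * M + W) (hW : L * W = W * M) (k : ℕ) :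
    L ^ (k + 1) * Z = Z * M ^ (k + 1) + (k + 1) • (W * M ^ k) := by
  induction k with
  | zero => simpa using hZ
  | succ k ih =>
    have hWk : L * (W * M ^ k) = W * M ^ (k + 1) := by
      rw [← mul_assoc, hW, mul_assoc, ← pow_succ']
    calc L ^ (k + 1 + 1) * Z = L * (L ^ (k + 1) * Z) := by rw [pow_succ', mul_assoc]
      _ = (Z * M + W) * M ^ (k + 1) + (k + 1) • (W * M ^ (k + 1)) := by
        rw [ih, mul_add, ← mul_assoc, hZ, mul_smul_comm, hWk]
      _ = Z * M ^ (k + 1 + 1) + (k + 1 + 1) • (W * M ^ (k + 1)) := by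
        rw [add_mul, mul_assoc, ← pow_succ', succ_nsmul' _ (k + 1)]
        abel

section ExpIntertwining

variable {𝔸 : Type*} [NormedRing 𝔸] [NormedAlgebra ℚ 𝔸] [CompleteSpace 𝔸]

theorem exp_mul_eq_add_mul_exp_of_mul_eq_add {L M Z W : 𝔸} (hZ : L * Z = Z * M + W)
    (hW : L * W = W * M) : exp L * Z = (Z + W) * exp M := by
  -- Drop the `k = 0` terms (both equal to `Z`); the remaining terms match one by one.
  have hL := (hasSum_nat_add_iff' 1).mpr ((exp_series_hasSum_exp' (𝕂 := ℚ) L).mul_right Z)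
  have hZM := (hasSum_nat_add_iff' 1).mpr ((exp_series_hasSum_exp' (𝕂 := ℚ) M).mul_left Z)
  have hWM := (exp_series_hasSum_exp' (𝕂 := ℚ) M).mul_left W
  have hsum := hZM.add hWM
  have hterm : ∀ k : ℕ, ((k + 1).factorial : ℚ)⁻¹ • L ^ (k + 1) * Z
      = Z * (((k + 1).factorial : ℚ)⁻¹ • M ^ (k + 1)) + W * ((k.factorial : ℚ)⁻¹ • M ^ k) := by
    intro k
    rw [smul_mul_assoc, pow_succ_mul_eq_of_mul_eq_add hZ hW, smul_add, mul_smul_comm,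
      mul_smul_comm, ← Nat.cast_smul_eq_nsmul ℚ, smul_smul]
    congr 2
    rw [Nat.factorial_succ]
    push_cast
    field_simp
  simp only [hterm] at hL
  have h := hL.unique hsum
  simp only [Finset.range_one, Finset.sum_singleton, pow_zero, Nat.factorial_zero, Nat.cast_one,
    inv_one, one_smul, one_mul, mul_one] at h
  rw [add_mul, sub_eq_iff_eq_add.mp h]
  abel

theorem mul_sub_mul_eq_zero_of_exp_eq_exp {L M Z : 𝔸} (hexp : exp L = exp M)
    (hZ : Commute (exp M) Z) (h : L * (L * Z - Z * M) = (L * Z - Z * M) * M) :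
    L * Z - Z * M = 0 := by
  have key : exp L * Z = (Z + (L * Z - Z * M)) * exp M :=
    exp_mul_eq_add_mul_exp_of_mul_eq_add (add_sub_cancel _ _).symm h
  rw [hexp, hZ.eq, add_mul, left_eq_add] at key
  exact (isUnit_exp M).mul_left_eq_zero.mp key

end ExpIntertwining

theorem SemiconjBy.aeval {R A : Type*} [CommSemiring R] [Semiring A] [Algebra R A] {a x y : A}
    (h : SemiconjBy a x y) (p : R[X]) : SemiconjBy a (aeval x p) (aeval y p) := by
  induction p using Polynomial.induction_on' with
  | add p q hp hq => simpa only [map_add] using hp.add_right hq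
  | monomial k r =>
    simpa only [aeval_monomial] using
      SemiconjBy.mul_right (Algebra.commutes r a).symm (h.pow_right k)

namespace Module.End

theorem eq_zero_of_isNilpotent_of_apply_apply_eq_zero {R V : Type*} [Semiring R]
    [AddCommMonoid V] [Module R V] {f : Module.End R V} (hf : IsNilpotent f)
    (h : ∀ v, f (f v) = 0 → f v = 0) : f = 0 := by
  have hpow : ∀ k v, (f ^ k) v = 0 → f v = 0 := by
    intro k
    induction k with
    | zero => intro v hv; simp_all
    | succ k ih => exact fun v hv ↦ h v (ih (f v) (by rwa [← mul_apply, ← pow_succ]))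
  obtain ⟨k, hk⟩ := hf
  ext v
  exact hpow k v (by simp [hk])

variable {K V : Type*} [Field K] [IsAlgClosed K] [AddCommGroup V] [Module K V]
  [FiniteDimensional K V]

theorem isNilpotent_of_forall_hasEigenvalue_eq_zero {f : Module.End K V}
    (h : ∀ c, f.HasEigenvalue c → c = 0) : IsNilpotent f := by
  have hmonic := minpoly.monic (Algebra.IsIntegral.isIntegral (R := K) f)
  have hroots : (minpoly K f).roots = Multiset.replicate (minpoly K f).roots.card 0 :=
    Multiset.eq_replicate_card.mpr fun c hc ↦
      h c (hasEigenvalue_iff_isRoot.mpr (isRoot_of_mem_roots hc))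
  refine ⟨(minpoly K f).roots.card, ?_⟩
  have := minpoly.aeval K f
  rwa [(IsAlgClosed.splits _).eq_prod_roots_of_monic hmonic, hroots, Multiset.map_replicate,
    Multiset.prod_replicate, map_zero, sub_zero, map_pow, aeval_X] at this

theorem apply_eq_zero_of_mem_of_eigenvalues_eq_zero (f : Module.End K V)
    {p : Submodule K V} (hp : ∀ v ∈ p, f v ∈ p)
    (heig : ∀ (c : K), ∀ v ∈ p, v ≠ 0 → f v = c • v → c = 0)
    (hker : ∀ v ∈ p, f (f v) = 0 → f v = 0) : ∀ v ∈ p, f v = 0 := by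
  have hg : f.restrict hp = 0 := by
    refine eq_zero_of_isNilpotent_of_apply_apply_eq_zero
      (isNilpotent_of_forall_hasEigenvalue_eq_zero fun c hc ↦ ?_) fun v hv ↦ ?_
    · obtain ⟨v, hv⟩ := hc.exists_hasEigenvector
      exact heig c v v.2 (by simpa using hv.2) (by simpa using congr(($hv.apply_eq_smul : V)))
    · ext
      exact hker v v.2 (by simpa using congr(($hv : V)))
  intro v hv
  simpa using congr(($hg ⟨v, hv⟩ : V))

end Module.End

namespace Matrix

variable {ι : Type*} [Fintype ι] [DecidableEq ι]

theorem apply_mem_spectrum_map_iff {K K' : Type*} [Field K] [Field K'] (f : K →+* K')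
    (A : Matrix ι ι K) (z : K) : f z ∈ spectrum K' (A.map f) ↔ z ∈ spectrum K A := by
  rw [mem_spectrum_iff_isRoot_charpoly, mem_spectrum_iff_isRoot_charpoly, charpoly_map, IsRoot,
    eval_map_apply, map_eq_zero, IsRoot]

theorem spectrum_inter_nonempty_of_semiconjBy {K : Type*} [Field K] [IsAlgClosed K]
    {A B Z : Matrix ι ι K} (hZ : Z ≠ 0) (h : SemiconjBy Z B A) :
    (spectrum K A ∩ spectrum K B).Nonempty := by
  obtain ⟨i, -, -⟩ : ∃ i j, Z i j ≠ 0 := by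
    by_contra! hz
    exact hZ (ext hz)
  have hp : Z * aeval B A.charpoly = 0 := by
    rw [(h.aeval A.charpoly).eq, aeval_self_charpoly, zero_mul]
  have h0 : (0 : K) ∈ spectrum K (aeval B A.charpoly) :=
    (spectrum.zero_mem_iff K).mpr fun hu ↦ hZ (hu.mul_left_eq_zero.mp hp)
  have hdeg : 0 < A.charpoly.degree := by
    rw [charpoly_degree_eq_dim]
    exact_mod_cast Fintype.card_pos_iff.mpr ⟨i⟩
  rw [spectrum.map_polynomial_aeval_of_degree_pos B _ hdeg] at h0
  obtain ⟨μ, hμB, hμA⟩ := h0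
  exact ⟨μ, mem_spectrum_iff_isRoot_charpoly.mpr hμA, hμB⟩

theorem exp_map_starRingEnd {𝔸 : Type*} [CommRing 𝔸] [StarRing 𝔸] [TopologicalSpace 𝔸]
    [IsTopologicalRing 𝔸] [ContinuousStar 𝔸] [Algebra ℚ 𝔸] [T2Space 𝔸] (A : Matrix ι ι 𝔸) :
    exp (A.map (starRingEnd 𝔸)) = (exp A).map (starRingEnd 𝔸) := by
  have h (B : Matrix ι ι 𝔸) : B.map (starRingEnd 𝔸) = Bᴴᵀ := by ext; simp [starRingEnd_apply]
  rw [h, h, exp_transpose, exp_conjTranspose]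

theorem exp_algebraMap (c : ℂ) :
    exp (algebraMap ℂ (Matrix ι ι ℂ) c) = algebraMap ℂ _ (Complex.exp c) := by
  rw [Complex.exp_eq_exp_ℂ]
  open scoped Norms.Operator in exact (algebraMap_exp_comm c).symm

theorem eq_zero_of_mul_sub_mul_eq_smul {L M Z : Matrix ι ι ℂ} {c : ℂ} (hexp : exp L = exp M)
    (hL : ∀ z ∈ spectrum ℂ L, -Real.pi < z.im ∧ z.im < Real.pi)
    (hM : ∀ z ∈ spectrum ℂ M, -Real.pi < z.im ∧ z.im < Real.pi)
    (hZ : Commute (exp M) Z) (hZ0 : Z ≠ 0) (hc : L * Z - Z * M = c • Z) : c = 0 := by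
  have hsemi : SemiconjBy Z (M + algebraMap ℂ _ c) L := by
    rw [SemiconjBy, mul_add, Algebra.algebraMap_eq_smul_one, mul_smul_comm, mul_one, ← hc]
    abel
  have hexp_c : Complex.exp c = 1 := by
    have h : Complex.exp c • (Z * exp M) = Z * exp M := by
      calc Complex.exp c • (Z * exp M) = Z * (exp M * algebraMap ℂ _ (Complex.exp c)) := by
            rw [Algebra.algebraMap_eq_smul_one, mul_smul_comm, mul_one, mul_smul_comm]
        _ = Z * exp (M + algebraMap ℂ _ c) := by
            rw [exp_add_of_commute _ _ (Algebra.commutes c M).symm, exp_algebraMap]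
        _ = exp L * Z := by open scoped Norms.Operator in exact hsemi.exp_right
        _ = Z * exp M := by rw [hexp, hZ.eq]
    have hne : Z * exp M ≠ 0 := by rwa [Ne, (isUnit_exp M).mul_left_eq_zero]
    exact smul_left_injective ℂ hne (h.trans (one_smul ℂ _).symm)
  obtain ⟨μ, hμL, hμ⟩ := spectrum_inter_nonempty_of_semiconjBy hZ0 hsemi
  rw [← spectrum.add_singleton_eq, Set.add_singleton] at hμ
  obtain ⟨ν, hνM, rfl⟩ := hμ
  have hνc : ν + c = ν :=
    Complex.exp_inj_of_neg_pi_lt_of_le_pi (hL _ hμL).1 (hL _ hμL).2.le (hM ν hνM).1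
      (hM ν hνM).2.le (by rw [Complex.exp_add, hexp_c, mul_one])
  simpa using hνc

theorem mul_eq_mul_of_exp_eq_exp {L M Z : Matrix ι ι ℂ} (hexp : exp L = exp M)
    (hL : ∀ z ∈ spectrum ℂ L, -Real.pi < z.im ∧ z.im < Real.pi)
    (hM : ∀ z ∈ spectrum ℂ M, -Real.pi < z.im ∧ z.im < Real.pi)
    (hZ : Commute (exp M) Z) : L * Z = Z * M := by
  let S : Module.End ℂ (Matrix ι ι ℂ) := LinearMap.mulLeft ℂ L - LinearMap.mulRight ℂ M
  let C : Submodule ℂ (Matrix ι ι ℂ) := (Subalgebra.centralizer ℂ {exp M}).toSubmodule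
  have hmem : ∀ Z, Z ∈ C ↔ Commute (exp M) Z := by
    intro Z; simp [C, Subalgebra.mem_centralizer_iff, Commute, SemiconjBy]
  have hLX : Commute L (exp M) := hexp ▸ (Commute.refl L).exp_right
  have hMX : Commute M (exp M) := (Commute.refl M).exp_right
  have hSC : ∀ Z ∈ C, S Z ∈ C := by
    intro Z hZ
    rw [hmem] at hZ ⊢
    exact (hLX.symm.mul_right hZ).sub_right (hZ.mul_right hMX.symm)
  have := S.apply_eq_zero_of_mem_of_eigenvalues_eq_zero hSC
    (fun c Z hZ hZ0 hc ↦ eq_zero_of_mul_sub_mul_eq_smul hexp hL hM ((hmem Z).mp hZ) hZ0 hc)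
    (fun Z hZ h ↦ by
      open scoped Norms.Operator in
      exact mul_sub_mul_eq_zero_of_exp_eq_exp hexp ((hmem Z).mp hZ) (sub_eq_zero.mp h))
    Z ((hmem Z).mpr hZ)
  exact sub_eq_zero.mp this

end Matrix

theorem principal_log_of_real_is_real_general
    (n : ℕ) (X L : Matrix (Fin n) (Fin n) ℂ)
    (hexp : NormedSpace.exp L = X)
    (hstrip : ∀ z ∈ spectrum ℂ L, -Real.pi < z.im ∧ z.im < Real.pi)
    (hreal : ∀ i j, (starRingEnd ℂ) (X i j) = X i j) :
    ∀ i j, (starRingEnd ℂ) (L i j) = L i j := by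
  set M := L.map (starRingEnd ℂ)
  have hexpM : exp M = X := by
    rw [exp_map_starRingEnd, hexp]
    exact ext hreal
  have hM : ∀ z ∈ spectrum ℂ M, -Real.pi < z.im ∧ z.im < Real.pi := by
    intro z hz
    rw [← Complex.conj_conj z, apply_mem_spectrum_map_iff] at hz
    simpa [and_comm, neg_lt] using hstrip _ hz
  have hLM : L = M := by
    simpa using mul_eq_mul_of_exp_eq_exp (hexp.trans hexpM.symm) hstrip hM (Commute.one_right _)
  exact fun i j ↦ (congrFun₂ hLM i j).symm

/-- If `X` has real entries and no eigenvalue on `(-∞, 0]`, and `L` is its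
principal logarithm, then `L` has real entries. -/
theorem principal_log_of_real_is_real
    (n : ℕ) (X L : Matrix (Fin n) (Fin n) ℂ)
    (hspec : ∀ z ∈ spectrum ℂ X, ¬ (z.im = 0 ∧ z.re ≤ 0))
    (hexp : NormedSpace.exp L = X)
    (hstrip : ∀ z ∈ spectrum ℂ L, -Real.pi < z.im ∧ z.im < Real.pi)
    (hreal : ∀ i j, (starRingEnd ℂ) (X i j) = X i j) :
    ∀ i j, (starRingEnd ℂ) (L i j) = L i j :=
  principal_log_of_real_is_real_general n X L hexp hstrip hreal
end

section
/- Let X be a 2m-by-2m complex matrix with no eigenvalue on the closed negative real axis (-infinity, 0], and let L be the principal logarithm of X, i.e. exp(L) = X and every eigenvalue of L has imaginary part strictly between -pi and pi. If X is self-dual (X^♯ = X), then L is self-dual: L^♯ = L. -/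
open Matrix

/-- The matrix `Z = [[0, I], [-I, 0]]` on `ℂ^(m ⊕ m)`. -/
noncomputable def Zmat (m : ℕ) : Matrix (Fin m ⊕ Fin m) (Fin m ⊕ Fin m) ℂ :=
  Matrix.fromBlocks 0 1 (-1) 0

/-- The dual `X^♯ = -Z Xᵀ Z` of a `2m × 2m` complex matrix. -/
noncomputable def dual {m : ℕ} (X : Matrix (Fin m ⊕ Fin m) (Fin m ⊕ Fin m) ℂ) :
    Matrix (Fin m ⊕ Fin m) (Fin m ⊕ Fin m) ℂ :=
  -(Zmat m * Xᵀ * Zmat m)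

/-!
Since `Z⁻¹ = -Z`, `L^♯ = Z Lᵀ Z⁻¹` has the same spectrum as `L` and exponential `X^♯ = X`, so
the theorem reduces to the injectivity of `exp` on matrices with spectrum in the strip
`|Im z| < π`.

On the generalized eigenspace of `A` for `μ`, `N = A - μ` is nilpotent, so `exp A = e^μ exp N`
has generalized eigenvalue `e^μ` there, and `N` is recovered as `q(exp N - 1)` for a polynomial
`q` (the logarithm modulo `T^n`) that does not depend on `A`. As `exp` is injective on the strip,
the generalized eigenspace of `exp A` for `e^μ` is exactly that of `A` for `μ`. Hence two such
matrices with the same exponential have the same generalized eigenspaces and agree on each.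
-/

open Polynomial

theorem Polynomial.exists_X_pow_dvd_comp_sub_X {R : Type*} [CommRing R] {Y : R[X]}
    (hY : X ^ 2 ∣ Y - X) (n : ℕ) : ∃ q : R[X], X ^ n ∣ q.comp Y - X := by
  induction n with
  | zero => exact ⟨0, by simp⟩
  | succ n ih =>
    obtain ⟨q, S, hS⟩ := ih
    obtain ⟨T, hT⟩ := hY
    have hYn : Y ^ n = X ^ n * (1 + X * T) ^ n := by
      rw [← mul_pow]; congr 1; linear_combination hT
    -- cancel the `X ^ n` term of the error, using `Y ^ n ≡ X ^ n` modulo `X ^ (n + 1)`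
    obtain ⟨U, hU⟩ : X ∣ S - C (S.coeff 0) * (1 + X * T) ^ n := by
      simp [X_dvd_iff, coeff_zero_eq_eval_zero]
    refine ⟨q - C (S.coeff 0) * X ^ n, U, ?_⟩
    rw [sub_comp, mul_comp, C_comp, X_pow_comp, hYn]
    linear_combination hS + X ^ n * hU

theorem PowerSeries.X_sq_dvd_trunc_exp_sub_one_sub_X (K : Type*) [CommRing K] [Algebra ℚ K]
    (n : ℕ) : Polynomial.X ^ 2 ∣ trunc (n + 2) (exp K) - 1 - Polynomial.X := by
  rw [Polynomial.X_pow_dvd_iff]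
  intro d hd
  interval_cases d <;> simp [coeff_trunc, Polynomial.coeff_one, Polynomial.coeff_X]

namespace Module.End

variable {K V : Type*} [Field K] [AddCommGroup V] [Module K V]

theorem hasEigenvalue_of_mem_maxGenEigenspace {f : End K V} {μ : K} {v : V}
    (hv : v ∈ f.maxGenEigenspace μ) (hv0 : v ≠ 0) : f.HasEigenvalue μ :=
  HasUnifEigenvalue.lt (k := ⊤) zero_lt_one ((Submodule.ne_bot_iff _).mpr ⟨v, hv, hv0⟩)

theorem maxGenEigenspace_le_of_forall_le_maxGenEigenspace [IsAlgClosed K]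
    [FiniteDimensional K V] {f g : End K V} {φ : K → K}
    (hfg : ∀ ν, f.maxGenEigenspace ν ≤ g.maxGenEigenspace (φ ν))
    {μ : K} (hμ : ∀ ν, f.HasEigenvalue ν → φ ν = φ μ → ν = μ) :
    g.maxGenEigenspace (φ μ) ≤ f.maxGenEigenspace μ := by
  intro w hw
  have htop : w ∈ f.maxGenEigenspace μ ⊔ ⨆ ν, ⨆ (_ : ν ≠ μ), f.maxGenEigenspace ν := by
    rw [← iSup_split_single, iSup_maxGenEigenspace_eq_top]; trivial
  obtain ⟨a, ha, b, hb, rfl⟩ := Submodule.mem_sup.mp htop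
  have hle : ⨆ ν, ⨆ (_ : ν ≠ μ), f.maxGenEigenspace ν
      ≤ ⨆ ℓ ∈ {ℓ | ℓ ≠ φ μ}, g.maxGenEigenspace ℓ := by
    refine iSup₂_le fun ν hν ↦ ?_
    by_cases hν0 : f.maxGenEigenspace ν = ⊥
    · simp [hν0]
    obtain ⟨u, hu, hu0⟩ := Submodule.exists_mem_ne_zero_of_ne_bot hν0
    have hφ : φ ν ≠ φ μ := fun h ↦ hν (hμ ν (hasEigenvalue_of_mem_maxGenEigenspace hu hu0) h)
    exact (hfg ν).trans (le_biSup _ hφ)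
  have hb_same : b ∈ g.maxGenEigenspace (φ μ) := by
    simpa using Submodule.sub_mem _ hw (hfg μ ha)
  have hb0 : b = 0 := by
    have hdisj := (independent_maxGenEigenspace g).disjoint_biSup
      (show φ μ ∉ {ℓ | ℓ ≠ φ μ} by simp)
    simpa using hdisj.le_bot ⟨hb_same, hle hb⟩
  simpa [hb0] using ha

end Module.End

namespace Matrix

variable {ι : Type*} [Fintype ι]

theorem mulVec_mulVec_eq_zero_of_commute {R : Type*} [CommRing R] {P Q : Matrix ι ι R}
    {w : ι → R} (hPQ : Commute P Q) (hw : P *ᵥ w = 0) : P *ᵥ (Q *ᵥ w) = 0 := by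
  rw [mulVec_mulVec, hPQ.eq, ← mulVec_mulVec, hw, mulVec_zero]

variable [DecidableEq ι]

section CommRing

variable {R : Type*} [CommRing R]

theorem spectrum_transpose (M : Matrix ι ι R) : spectrum R Mᵀ = spectrum R M := by
  ext z
  rw [spectrum.mem_iff, spectrum.mem_iff, ← isUnit_transpose, transpose_sub,
    transpose_transpose, algebraMap_eq_diagonal, diagonal_transpose]

theorem aeval_mulVec_eq_of_X_pow_dvd {N : Matrix ι ι R} {w : ι → R} {n : ℕ} {p q : R[X]}
    (hw : N ^ n *ᵥ w = 0) (hpq : X ^ n ∣ p - q) : aeval N p *ᵥ w = aeval N q *ᵥ w := by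
  obtain ⟨S, hS⟩ := hpq
  rw [show p = q + S * X ^ n by linear_combination hS, map_add, map_mul, map_pow, aeval_X,
    add_mulVec, ← mulVec_mulVec, hw, mulVec_zero, add_zero]

theorem aeval_mulVec_eq_aeval_comp {M N : Matrix ι ι R} {n : ℕ} {p : R[X]}
    (hM : ∀ w, N ^ n *ᵥ w = 0 → M *ᵥ w = aeval N p *ᵥ w) (q : R[X]) {w : ι → R}
    (hw : N ^ n *ᵥ w = 0) : aeval M q *ᵥ w = aeval N (q.comp p) *ᵥ w := by
  induction q using Polynomial.induction_on generalizing w with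
  | C a => simp
  | add q r hq hr => simp only [map_add, add_comp, add_mulVec, hq hw, hr hw]
  | monomial k a ih =>
    have hNp : Commute (N ^ n) (aeval N p) := by
      simpa using ((commute_X p).pow_left n).map (aeval N)
    have hpw : N ^ n *ᵥ (aeval N p *ᵥ w) = 0 := mulVec_mulVec_eq_zero_of_commute hNp hw
    rw [pow_succ, ← mul_assoc, map_mul, aeval_X, ← mulVec_mulVec, hM w hw, ih hpw,
      mulVec_mulVec, mul_comp (C a * X ^ k) X p, X_comp, map_mul]

end CommRing

section Field

variable {K : Type*} [Field K]

theorem mem_maxGenEigenspace_toLinAlgEquiv'_iff {A : Matrix ι ι K} {μ : K} {v : ι → K} :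
    v ∈ Module.End.maxGenEigenspace (toLinAlgEquiv' A) μ
      ↔ (A - μ • 1) ^ Fintype.card ι *ᵥ v = 0 := by
  rw [Module.End.maxGenEigenspace_eq_genEigenspace_finrank, Module.finrank_fintype_fun_eq_card,
    Module.End.mem_genEigenspace_nat, LinearMap.mem_ker, ← toLinAlgEquiv'_apply]
  simp [map_pow]

theorem mem_spectrum_of_mem_maxGenEigenspace {A : Matrix ι ι K} {μ : K} {v : ι → K}
    (hv : v ∈ Module.End.maxGenEigenspace (toLinAlgEquiv' A) μ) (hv0 : v ≠ 0) :
    μ ∈ spectrum K A :=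
  AlgEquiv.spectrum_eq toLinAlgEquiv' A ▸
    (Module.End.hasEigenvalue_of_mem_maxGenEigenspace hv hv0).mem_spectrum

end Field

section Exp

attribute [local instance] Matrix.linftyOpNormedRing Matrix.linftyOpNormedAlgebra

theorem exp_mulVec_eq_aeval_trunc {N : Matrix ι ι ℂ} {w : ι → ℂ} {n k : ℕ}
    (hw : N ^ n *ᵥ w = 0) (hnk : n ≤ k) :
    NormedSpace.exp N *ᵥ w = aeval N (PowerSeries.trunc k (PowerSeries.exp ℂ)) *ᵥ w := by
  have hexp := (NormedSpace.exp_series_hasSum_exp' (𝕂 := ℂ) N).map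
    (mulVec.addMonoidHomLeft w) (continuous_id.matrix_mulVec continuous_const)
  have htail : ∀ i ∉ Finset.range k, ((i.factorial⁻¹ : ℂ) • N ^ i) *ᵥ w = 0 := by
    intro i hi
    rw [Finset.mem_range, not_lt] at hi
    rw [← Nat.sub_add_cancel (hnk.trans hi), pow_add, smul_mulVec, ← mulVec_mulVec, hw,
      mulVec_zero, smul_zero]
  have htrunc : aeval N (PowerSeries.trunc k (PowerSeries.exp ℂ)) *ᵥ w
      = ∑ i ∈ Finset.range k, ((i.factorial⁻¹ : ℂ) • N ^ i) *ᵥ w := by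
    rw [aeval_def, PowerSeries.eval₂_trunc_eq_sum_range, sum_mulVec]
    simp [Algebra.smul_def]
  exact hexp.unique (htrunc ▸ hasSum_sum_of_ne_finset_zero htail)

theorem exp_sub_one_mulVec_eq_aeval {N : Matrix ι ι ℂ} {n : ℕ} {w : ι → ℂ}
    (hw : N ^ n *ᵥ w = 0) :
    (NormedSpace.exp N - 1) *ᵥ w
      = aeval N (PowerSeries.trunc (n + 2) (PowerSeries.exp ℂ) - 1) *ᵥ w := by
  rw [sub_mulVec, exp_mulVec_eq_aeval_trunc (k := n + 2) hw (by omega), map_sub, map_one,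
    sub_mulVec]

theorem pow_exp_sub_one_mulVec_eq_zero {N : Matrix ι ι ℂ} {n : ℕ} {w : ι → ℂ}
    (hw : N ^ n *ᵥ w = 0) : (NormedSpace.exp N - 1) ^ n *ᵥ w = 0 := by
  obtain ⟨T, hT⟩ := PowerSeries.X_sq_dvd_trunc_exp_sub_one_sub_X ℂ n
  have hX : X ∣ PowerSeries.trunc (n + 2) (PowerSeries.exp ℂ) - 1 :=
    ⟨1 + X * T, by linear_combination hT⟩
  calc (NormedSpace.exp N - 1) ^ n *ᵥ w = aeval (NormedSpace.exp N - 1) (X ^ n) *ᵥ w := by simp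
    _ = aeval N ((X ^ n).comp (PowerSeries.trunc (n + 2) (PowerSeries.exp ℂ) - 1)) *ᵥ w :=
      aeval_mulVec_eq_aeval_comp (fun _ ↦ exp_sub_one_mulVec_eq_aeval) _ hw
    _ = aeval N 0 *ᵥ w :=
      aeval_mulVec_eq_of_X_pow_dvd hw (by simpa using pow_dvd_pow_of_dvd hX n)
    _ = 0 := by simp

-- `q` is `log (1 + T)` modulo `T ^ n`, obtained by inverting the truncated `exp T - 1`.
theorem exists_mulVec_eq_aeval_exp_sub_one (n : ℕ) :
    ∃ q : ℂ[X], ∀ (N : Matrix ι ι ℂ) (w : ι → ℂ), N ^ n *ᵥ w = 0 →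
      N *ᵥ w = aeval (NormedSpace.exp N - 1) q *ᵥ w := by
  obtain ⟨q, hq⟩ :=
    exists_X_pow_dvd_comp_sub_X (PowerSeries.X_sq_dvd_trunc_exp_sub_one_sub_X ℂ n) n
  refine ⟨q, fun N w hw ↦ ?_⟩
  rw [aeval_mulVec_eq_aeval_comp (fun _ ↦ exp_sub_one_mulVec_eq_aeval) q hw,
    aeval_mulVec_eq_of_X_pow_dvd hw hq, aeval_X]

theorem exp_eq_exp_smul_exp_sub_smul_one (A : Matrix ι ι ℂ) (μ : ℂ) :
    NormedSpace.exp A = Complex.exp μ • NormedSpace.exp (A - μ • 1) := by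
  have hμ : NormedSpace.exp (algebraMap ℂ (Matrix ι ι ℂ) μ)
      = algebraMap ℂ _ (Complex.exp μ) := by
    rw [Complex.exp_eq_exp_ℂ]
    exact (NormedSpace.algebraMap_exp_comm μ).symm
  conv_lhs => rw [show A = algebraMap ℂ _ μ + (A - μ • 1) by
    rw [Algebra.algebraMap_eq_smul_one]; abel]
  rw [Matrix.exp_add_of_commute _ _ (Algebra.commute_algebraMap_left _ _), hμ, ← Algebra.smul_def]

theorem maxGenEigenspace_le_maxGenEigenspace_exp (A : Matrix ι ι ℂ) (μ : ℂ) :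
    Module.End.maxGenEigenspace (toLinAlgEquiv' A) μ
      ≤ Module.End.maxGenEigenspace (toLinAlgEquiv' (NormedSpace.exp A)) (Complex.exp μ) := by
  intro v hv
  rw [mem_maxGenEigenspace_toLinAlgEquiv'_iff] at hv ⊢
  rw [exp_eq_exp_smul_exp_sub_smul_one A μ, ← smul_sub, _root_.smul_pow, smul_mulVec,
    pow_exp_sub_one_mulVec_eq_zero hv, smul_zero]

theorem exists_mulVec_eq_of_mem_maxGenEigenspace :
    ∃ q : ℂ[X], ∀ (A : Matrix ι ι ℂ) (μ : ℂ) (v : ι → ℂ),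
      v ∈ Module.End.maxGenEigenspace (toLinAlgEquiv' A) μ →
        A *ᵥ v = μ • v + aeval (Complex.exp (-μ) • NormedSpace.exp A - 1) q *ᵥ v := by
  obtain ⟨q, hq⟩ := exists_mulVec_eq_aeval_exp_sub_one (ι := ι) (Fintype.card ι)
  refine ⟨q, fun A μ v hv ↦ ?_⟩
  rw [exp_eq_exp_smul_exp_sub_smul_one A μ, smul_smul, ← Complex.exp_add, neg_add_cancel,
    Complex.exp_zero, one_smul, ← hq _ v (mem_maxGenEigenspace_toLinAlgEquiv'_iff.mp hv),
    sub_mulVec, smul_mulVec, one_mulVec, add_sub_cancel]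

theorem maxGenEigenspace_le_of_exp_eq {A B : Matrix ι ι ℂ}
    (hB : ∀ z ∈ spectrum ℂ B, -Real.pi < z.im ∧ z.im < Real.pi)
    (h : NormedSpace.exp A = NormedSpace.exp B) {μ : ℂ} (hμ : -Real.pi < μ.im ∧ μ.im < Real.pi) :
    Module.End.maxGenEigenspace (toLinAlgEquiv' A) μ
      ≤ Module.End.maxGenEigenspace (toLinAlgEquiv' B) μ := by
  refine (maxGenEigenspace_le_maxGenEigenspace_exp A μ).trans (h ▸ ?_)
  refine Module.End.maxGenEigenspace_le_of_forall_le_maxGenEigenspace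
    (maxGenEigenspace_le_maxGenEigenspace_exp B) fun ν hν hνμ ↦ ?_
  have hν' := hB ν (AlgEquiv.spectrum_eq toLinAlgEquiv' B ▸ hν.mem_spectrum)
  exact Complex.exp_inj_of_neg_pi_lt_of_le_pi hν'.1 hν'.2.le hμ.1 hμ.2.le hνμ

theorem eq_of_exp_eq {A B : Matrix ι ι ℂ}
    (hA : ∀ z ∈ spectrum ℂ A, -Real.pi < z.im ∧ z.im < Real.pi)
    (hB : ∀ z ∈ spectrum ℂ B, -Real.pi < z.im ∧ z.im < Real.pi)
    (h : NormedSpace.exp A = NormedSpace.exp B) : A = B := by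
  obtain ⟨q, hq⟩ := exists_mulVec_eq_of_mem_maxGenEigenspace (ι := ι)
  refine toLinAlgEquiv'.injective (LinearMap.ext fun v ↦ ?_)
  have hv : v ∈ ⨆ μ, Module.End.maxGenEigenspace (toLinAlgEquiv' A) μ := by
    rw [Module.End.iSup_maxGenEigenspace_eq_top]; trivial
  induction hv using Submodule.iSup_induction' with
  | mem μ v hv =>
    rcases eq_or_ne v 0 with rfl | hv0
    · simp
    have hμ := hA μ (mem_spectrum_of_mem_maxGenEigenspace hv hv0)
    have hvB := maxGenEigenspace_le_of_exp_eq hB h hμ hv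
    rw [toLinAlgEquiv'_apply, toLinAlgEquiv'_apply, hq A μ v hv, hq B μ v hvB, h]
  | zero => simp
  | add v w _ _ hv hw => simp only [map_add, hv, hw]

end Exp

end Matrix

theorem Zmat_mul_Zmat (m : ℕ) : Zmat m * Zmat m = -1 := by
  rw [Zmat, fromBlocks_multiply, ← fromBlocks_one, fromBlocks_neg]
  simp

noncomputable def Zunit (m : ℕ) : (Matrix (Fin m ⊕ Fin m) (Fin m ⊕ Fin m) ℂ)ˣ where
  val := Zmat m
  inv := -Zmat m
  val_inv := by rw [mul_neg, Zmat_mul_Zmat, neg_neg]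
  inv_val := by rw [neg_mul, Zmat_mul_Zmat, neg_neg]

theorem dual_eq_units_conj {m : ℕ} (X : Matrix (Fin m ⊕ Fin m) (Fin m ⊕ Fin m) ℂ) :
    dual X = Zunit m * Xᵀ * ((Zunit m)⁻¹ : (Matrix (Fin m ⊕ Fin m) (Fin m ⊕ Fin m) ℂ)ˣ) := by
  simp [dual, Zunit]

theorem exp_dual {m : ℕ} (X : Matrix (Fin m ⊕ Fin m) (Fin m ⊕ Fin m) ℂ) :
    NormedSpace.exp (dual X) = dual (NormedSpace.exp X) := by
  rw [dual_eq_units_conj, dual_eq_units_conj, exp_units_conj, exp_transpose]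

theorem spectrum_dual {m : ℕ} (X : Matrix (Fin m ⊕ Fin m) (Fin m ⊕ Fin m) ℂ) :
    spectrum ℂ (dual X) = spectrum ℂ X := by
  rw [dual_eq_units_conj, spectrum.units_conjugate, spectrum_transpose]

theorem principal_log_of_selfDual_is_selfDual_general
    (m : ℕ) (X L : Matrix (Fin m ⊕ Fin m) (Fin m ⊕ Fin m) ℂ)
    (hexp : NormedSpace.exp L = X)
    (hstrip : ∀ z ∈ spectrum ℂ L, -Real.pi < z.im ∧ z.im < Real.pi)
    (hdual : dual X = X) :
    dual L = L := by
  refine eq_of_exp_eq (fun z hz ↦ hstrip z (spectrum_dual L ▸ hz)) hstrip ?_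
  rw [exp_dual, hexp, hdual]

/-- If `X` is self-dual and has no eigenvalue on `(-∞, 0]`, and `L` is its
principal logarithm, then `L` is self-dual. -/
theorem principal_log_of_selfDual_is_selfDual
    (m : ℕ) (X L : Matrix (Fin m ⊕ Fin m) (Fin m ⊕ Fin m) ℂ)
    (hspec : ∀ z ∈ spectrum ℂ X, ¬ (z.im = 0 ∧ z.re ≤ 0))
    (hexp : NormedSpace.exp L = X)
    (hstrip : ∀ z ∈ spectrum ℂ L, -Real.pi < z.im ∧ z.im < Real.pi)
    (hdual : dual X = X) :
    dual L = L :=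
  principal_log_of_selfDual_is_selfDual_general m X L hexp hstrip hdual
end

section
/- Let X be an n-by-n complex matrix with no eigenvalue on the closed negative real axis (-infinity, 0], and let R be the principal square root of X, i.e. R² = X and every eigenvalue of R has strictly positive real part. If X is complex symmetric (Xᵀ = X), then R is complex symmetric: Rᵀ = R. -/
open Matrix Polynomial

/-!
Both `R` and `Rᵀ` square to `X = Xᵀ`, so `M = Rᵀ - R` satisfies the Sylvester equation
`Rᵀ M = M (-R)`. The spectra of `Rᵀ` and `-R` lie in the open right and left half-planes, so they
are disjoint, and a Sylvester equation with disjoint spectra only has the solution `M = 0`: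
`q(Rᵀ) M = M q(-R) = 0` for the characteristic polynomial `q` of `-R`, while `q(Rᵀ)` is invertible
by the spectral mapping theorem.
-/

theorem Polynomial.aeval_mul_eq_mul_aeval {R A : Type*} [CommSemiring R] [Semiring A]
    [Algebra R A] {a b m : A} (h : a * m = m * b) (p : R[X]) :
    aeval a p * m = m * aeval b p := by
  have hpow (k : ℕ) : a ^ k * m = m * b ^ k := (SemiconjBy.pow_right h.symm k).symm
  induction p using Polynomial.induction_on' with
  | add p q hp hq => rw [map_add, map_add, add_mul, mul_add, hp, hq]
  | monomial k c =>
    rw [aeval_monomial, aeval_monomial, mul_assoc, hpow, ← mul_assoc, ← mul_assoc,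
      Algebra.commutes]

namespace Matrix

variable {K n : Type*} [Field K] [Fintype n] [DecidableEq n]

theorem spectrum_transpose_s6 (A : Matrix n n K) : spectrum K Aᵀ = spectrum K A := by
  ext z
  rw [mem_spectrum_iff_isRoot_charpoly, mem_spectrum_iff_isRoot_charpoly, charpoly_transpose]

theorem isUnit_aeval_charpoly_of_disjoint_spectrum [IsAlgClosed K] {A B : Matrix n n K}
    (hAB : Disjoint (spectrum K A) (spectrum K B)) : IsUnit (aeval A B.charpoly) := by
  cases isEmpty_or_nonempty n
  · exact isUnit_of_subsingleton _
  have hdeg : 0 < B.charpoly.degree := by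
    rw [charpoly_degree_eq_dim]
    exact_mod_cast Fintype.card_pos
  rw [← spectrum.zero_notMem_iff K, spectrum.map_polynomial_aeval_of_degree_pos A _ hdeg]
  rintro ⟨z, hzA, hz⟩
  exact hAB.notMem_of_mem_left hzA (mem_spectrum_iff_isRoot_charpoly.mpr hz)

theorem eq_zero_of_mul_eq_mul_of_disjoint_spectrum [IsAlgClosed K] {A B M : Matrix n n K}
    (h : A * M = M * B) (hAB : Disjoint (spectrum K A) (spectrum K B)) : M = 0 := by
  have hannihilate : aeval A B.charpoly * M = 0 := by
    rw [aeval_mul_eq_mul_aeval h, aeval_self_charpoly, mul_zero]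
  exact (isUnit_aeval_charpoly_of_disjoint_spectrum hAB).mul_right_eq_zero.mp hannihilate

end Matrix

theorem principal_sqrt_of_symmetric_is_symmetric_general
    (n : ℕ) (X R : Matrix (Fin n) (Fin n) ℂ)
    (hsq : R * R = X)
    (hre : ∀ z ∈ spectrum ℂ R, 0 < z.re)
    (hsymm : Xᵀ = X) :
    Rᵀ = R := by
  have hsylvester : Rᵀ * (Rᵀ - R) = (Rᵀ - R) * (-R) := by
    have hsq' : Rᵀ * Rᵀ = X := by rw [← transpose_mul, hsq, hsymm]
    rw [mul_sub, sub_mul, hsq', mul_neg, mul_neg, hsq]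
    abel
  have hdisjoint : Disjoint (spectrum ℂ Rᵀ) (spectrum ℂ (-R)) := by
    rw [spectrum_transpose_s6, ← spectrum.neg_eq, Set.disjoint_left]
    intro z hz hz_neg
    linarith [hre z hz, hre (-z) hz_neg, Complex.neg_re z]
  exact sub_eq_zero.mp (eq_zero_of_mul_eq_mul_of_disjoint_spectrum hsylvester hdisjoint)

/-- If `X` is complex symmetric with no eigenvalue on `(-∞, 0]`, and `R` is its
principal square root, then `R` is complex symmetric. -/
theorem principal_sqrt_of_symmetric_is_symmetric
    (n : ℕ) (X R : Matrix (Fin n) (Fin n) ℂ)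
    (hspec : ∀ z ∈ spectrum ℂ X, ¬ (z.im = 0 ∧ z.re ≤ 0))
    (hsq : R * R = X)
    (hre : ∀ z ∈ spectrum ℂ R, 0 < z.re)
    (hsymm : Xᵀ = X) :
    Rᵀ = R :=
  principal_sqrt_of_symmetric_is_symmetric_general n X R hsq hre hsymm
end

section
/- Let Y and Z be n-by-n complex matrices such that I + 3ZY is invertible, and set Y' = (1/3) Y (I + 8 (I + 3ZY)⁻¹) and Z' = (1/3) (I + 8 (I + 3ZY)⁻¹) Z. If Y and Z are unitary, then Y' and Z' are unitary. -/
/-!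
With `U = Z Y`, an isometry, and `A = 1 + 3U`, expanding `A* A` with `U* U = 1` gives
`A* A = A* + A + 8`, hence `(A* + 8)(A + 8) = 9 A* A`. As `B = 1 + 8 A⁻¹` satisfies `B A = A + 8`,
this says `B* B = 9`: `B / 3` is an isometry, and so are `Y' = Y (B / 3)` and `Z' = (B / 3) Z`.
Nothing depends on the constant `3` beyond its being self-adjoint and nonzero, with `3² - 1 = 8`.
-/

open Matrix

theorem star_mul_self_mul_eq_one {M : Type*} [Monoid M] [StarMul M] {a b : M}
    (ha : star a * a = 1) (hb : star b * b = 1) : star (a * b) * (a * b) = 1 := by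
  rw [star_mul, mul_assoc, ← mul_assoc (star a), ha, one_mul, hb]

section StarAlgebra

variable {𝕜 R : Type*} [CommRing 𝕜] [StarRing 𝕜] [Ring R] [StarRing R] [Algebra 𝕜 R]
  [StarModule 𝕜 R]

theorem star_mul_self_one_add_smul {U : R} (hU : star U * U = 1) {t : 𝕜} (ht : IsSelfAdjoint t) :
    star (1 + t • U) * (1 + t • U) = star (1 + t • U) + (1 + t • U) + (t ^ 2 - 1) • 1 := by
  simp only [star_add, star_one, star_smul, ht.star_eq, add_mul, mul_add, one_mul, mul_one,
    smul_mul_smul_comm, hU]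
  module

theorem star_mul_self_one_add_smul_inv (u : Rˣ) {c : 𝕜} (hc : IsSelfAdjoint c)
    (hu : star (u : R) * u = star (u : R) + u + c • 1) :
    star (1 + c • (↑u⁻¹ : R)) * (1 + c • (↑u⁻¹ : R)) = (1 + c) • 1 := by
  have hBu : (1 + c • (↑u⁻¹ : R)) * u = u + c • 1 := by
    rw [add_mul, one_mul, smul_mul_assoc, Units.inv_mul]
  have hconj : star (u : R) * (star (1 + c • (↑u⁻¹ : R)) * (1 + c • (↑u⁻¹ : R))) * u
      = star (u : R) * ((1 + c) • 1) * u := by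
    calc _ = star ((1 + c • (↑u⁻¹ : R)) * u) * ((1 + c • (↑u⁻¹ : R)) * u) := by
          simp only [star_mul, mul_assoc]
      _ = star (u : R) * ((1 + c) • 1) * u := by
          rw [hBu]
          simp only [star_add, star_smul, hc.star_eq, star_one, add_mul, mul_add, smul_mul_assoc,
            mul_smul_comm, one_mul, mul_one, hu]
          module
  exact u.isUnit.star.mul_left_cancel (u.isUnit.mul_right_cancel hconj)

end StarAlgebra

theorem star_mul_self_inv_smul_one_add_smul_inv {𝕜 R : Type*} [Field 𝕜] [StarRing 𝕜] [Ring R]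
    [StarRing R] [Algebra 𝕜 R] [StarModule 𝕜 R] {U : R} (hU : star U * U = 1) {t : 𝕜}
    (ht : IsSelfAdjoint t) (ht₀ : t ≠ 0) (u : Rˣ) (hu : (u : R) = 1 + t • U) :
    star (t⁻¹ • (1 + (t ^ 2 - 1) • (↑u⁻¹ : R))) * (t⁻¹ • (1 + (t ^ 2 - 1) • (↑u⁻¹ : R))) = 1 := by
  have hc : IsSelfAdjoint (t ^ 2 - 1) := (ht.pow 2).sub (.one 𝕜)
  rw [star_smul, smul_mul_smul_comm, star_mul_self_one_add_smul_inv u hc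
    (hu ▸ star_mul_self_one_add_smul hU ht), smul_smul, star_inv₀, ht.star_eq,
    add_sub_cancel, ← sq, inv_pow, inv_mul_cancel₀ (pow_ne_zero 2 ht₀), one_smul]

/-- The square-root iteration step
`Y' = (1/3) Y (I + 8 (I + 3ZY)⁻¹)`, `Z' = (1/3) (I + 8 (I + 3ZY)⁻¹) Z`
preserves unitarity. -/
theorem iteration_step_preserves_unitary
    (n : ℕ) (Y Z : Matrix (Fin n) (Fin n) ℂ)
    (hinv : IsUnit (1 + (3 : ℂ) • (Z * Y)))
    (Y' Z' : Matrix (Fin n) (Fin n) ℂ)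
    (hY' : Y' = (3 : ℂ)⁻¹ • (Y * (1 + (8 : ℂ) • (1 + (3 : ℂ) • (Z * Y))⁻¹)))
    (hZ' : Z' = (3 : ℂ)⁻¹ • ((1 + (8 : ℂ) • (1 + (3 : ℂ) • (Z * Y))⁻¹) * Z))
    (hYu : Yᴴ * Y = 1) (hZu : Zᴴ * Z = 1) :
    Y'ᴴ * Y' = 1 ∧ Z'ᴴ * Z' = 1 := by
  set S := (3 : ℂ)⁻¹ • (1 + ((3 : ℂ) ^ 2 - 1) • (↑hinv.unit⁻¹ : Matrix (Fin n) (Fin n) ℂ))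
    with hS_def
  have hS : star S * S = 1 :=
    star_mul_self_inv_smul_one_add_smul_inv (star_mul_self_mul_eq_one hZu hYu)
      (by simp [IsSelfAdjoint]) three_ne_zero hinv.unit rfl
  have hS_eq : (3 : ℂ)⁻¹ • (1 + (8 : ℂ) • (1 + (3 : ℂ) • (Z * Y))⁻¹) = S := by
    rw [hS_def, Matrix.coe_units_inv, IsUnit.unit_spec]; norm_num
  rw [← mul_smul_comm, hS_eq] at hY'
  rw [← smul_mul_assoc, hS_eq] at hZ'
  subst hY' hZ'
  exact ⟨star_mul_self_mul_eq_one hYu hS, star_mul_self_mul_eq_one hS hZu⟩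
end

section
/- Let Y and Z be n-by-n complex matrices such that I + 3ZY is invertible, and set Y' = (1/3) Y (I + 8 (I + 3ZY)⁻¹) and Z' = (1/3) (I + 8 (I + 3ZY)⁻¹) Z. If Y and Z are complex symmetric (Yᵀ = Y and Zᵀ = Z), then Y' and Z' are complex symmetric. -/
open Matrix

/-
From `(1 + Y Z) Y = Y (1 + Z Y)` one gets `(1 + Y Z)⁻¹ Y = Y (1 + Z Y)⁻¹`; when Y and Z are
symmetric, transposition exchanges `1 + 3 Z Y` with `1 + 3 Y Z`, and so it maps
`Y (1 + 8 (1 + 3 Z Y)⁻¹)` to `(1 + 8 (1 + 3 Y Z)⁻¹) Y`, which is the same matrix.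
-/

namespace Matrix

variable {m n R : Type*} [Fintype m] [Fintype n] [DecidableEq m] [DecidableEq n] [CommRing R]

/-- The identity also holds when `1 + A * B` is singular: by the Weinstein–Aronszajn identity
`1 + B * A` is then singular too, and both inverses are `0`. -/
theorem inv_one_add_mul_mul_comm (A : Matrix m n R) (B : Matrix n m R) :
    (1 + A * B)⁻¹ * A = A * (1 + B * A)⁻¹ := by
  by_cases h : IsUnit (1 + A * B).det
  · have h' : IsUnit (1 + B * A).det := by rwa [← det_one_add_mul_comm]
    have hcomm : (1 + A * B) * A = A * (1 + B * A) := by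
      simp only [Matrix.add_mul, Matrix.mul_add, Matrix.one_mul, Matrix.mul_one, Matrix.mul_assoc]
    calc (1 + A * B)⁻¹ * A = (1 + A * B)⁻¹ * ((1 + A * B) * A) * (1 + B * A)⁻¹ := by
          rw [hcomm, ← Matrix.mul_assoc, mul_nonsing_inv_cancel_right _ _ h']
      _ = A * (1 + B * A)⁻¹ := by rw [nonsing_inv_mul_cancel_left _ _ h]
  · have h' : ¬IsUnit (1 + B * A).det := by rwa [← det_one_add_mul_comm]
    rw [nonsing_inv_apply_not_isUnit _ h, nonsing_inv_apply_not_isUnit _ h',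
      Matrix.zero_mul, Matrix.mul_zero]

theorem one_add_smul_inv_one_add_smul_mul_mul_comm (c d : R) (A : Matrix m n R)
    (B : Matrix n m R) :
    (1 + d • (1 + c • (A * B))⁻¹) * A = A * (1 + d • (1 + c • (B * A))⁻¹) := by
  have h := inv_one_add_mul_mul_comm A (c • B)
  rw [Matrix.mul_smul, Matrix.smul_mul] at h
  rw [Matrix.add_mul, Matrix.mul_add, Matrix.one_mul, Matrix.mul_one, Matrix.smul_mul,
    Matrix.mul_smul, h]

theorem transpose_inv_one_add_smul_mul {A B : Matrix n n R} (hA : Aᵀ = A) (hB : Bᵀ = B) (c : R) :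
    (1 + c • (A * B))⁻¹ᵀ = (1 + c • (B * A))⁻¹ := by
  rw [transpose_nonsing_inv, transpose_add, transpose_one, transpose_smul, transpose_mul, hA, hB]

end Matrix

theorem iteration_step_preserves_symmetric_general
    (n : ℕ) (Y Z : Matrix (Fin n) (Fin n) ℂ)
    (Y' Z' : Matrix (Fin n) (Fin n) ℂ)
    (hY' : Y' = (3 : ℂ)⁻¹ • (Y * (1 + (8 : ℂ) • (1 + (3 : ℂ) • (Z * Y))⁻¹)))
    (hZ' : Z' = (3 : ℂ)⁻¹ • ((1 + (8 : ℂ) • (1 + (3 : ℂ) • (Z * Y))⁻¹) * Z))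
    (hYs : Yᵀ = Y) (hZs : Zᵀ = Z) :
    Y'ᵀ = Y' ∧ Z'ᵀ = Z' := by
  subst hY' hZ'
  simp only [transpose_smul, transpose_mul, transpose_add, transpose_one,
    transpose_inv_one_add_smul_mul hZs hYs, hYs, hZs]
  exact ⟨congrArg _ (one_add_smul_inv_one_add_smul_mul_mul_comm _ _ _ _),
    congrArg _ (one_add_smul_inv_one_add_smul_mul_mul_comm _ _ _ _).symm⟩

/-- The square-root iteration step
`Y' = (1/3) Y (I + 8 (I + 3ZY)⁻¹)`, `Z' = (1/3) (I + 8 (I + 3ZY)⁻¹) Z`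
preserves complex symmetry. -/
theorem iteration_step_preserves_symmetric
    (n : ℕ) (Y Z : Matrix (Fin n) (Fin n) ℂ)
    (hinv : IsUnit (1 + (3 : ℂ) • (Z * Y)))
    (Y' Z' : Matrix (Fin n) (Fin n) ℂ)
    (hY' : Y' = (3 : ℂ)⁻¹ • (Y * (1 + (8 : ℂ) • (1 + (3 : ℂ) • (Z * Y))⁻¹)))
    (hZ' : Z' = (3 : ℂ)⁻¹ • ((1 + (8 : ℂ) • (1 + (3 : ℂ) • (Z * Y))⁻¹) * Z))
    (hYs : Yᵀ = Y) (hZs : Zᵀ = Z) :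
    Y'ᵀ = Y' ∧ Z'ᵀ = Z' :=
  iteration_step_preserves_symmetric_general n Y Z Y' Z' hY' hZ' hYs hZs
end

section
/- Let Γ be the 2m-by-2m block matrix diag(I_m, -I_m). Let Y and Z be 2m-by-2m complex matrices such that I + 3ZY is invertible, and set Y' = (1/3) Y (I + 8 (I + 3ZY)⁻¹) and Z' = (1/3) (I + 8 (I + 3ZY)⁻¹) Z. If Γ Y Γ = Y† and Γ Z Γ = Z†, then Γ Y' Γ = Y'† and Γ Z' Γ = Z'†. -/
/-!
Write `h(A) = 1 + 8 (1 + 3A)⁻¹`. Having real coefficients, `h` commutes with `ᴴ` and with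
conjugation by the involution `Γ`, and the push-through identity gives `Y h(ZY) = h(YZ) Y`.
Chirality of `Y` and `Z` means `Yᴴ Zᴴ = Γ (YZ) Γ`, so
`Y'ᴴ = ⅓ h(Yᴴ Zᴴ) Yᴴ = ⅓ Γ h(YZ) Y Γ = Γ Y' Γ`. Finally `Z' = ⅓ Z h(YZ)` has the same shape
with `Y` and `Z` exchanged.
-/

open Matrix

/-- The grading `Γ = diag(I_m, -I_m)` on `ℂ^(m ⊕ m)`. -/
noncomputable def Gamma (m : ℕ) : Matrix (Fin m ⊕ Fin m) (Fin m ⊕ Fin m) ℂ :=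
  Matrix.fromBlocks 1 0 0 (-1)

lemma Gamma_mul_Gamma (m : ℕ) : Gamma m * Gamma m = 1 := by
  simp [Gamma, Matrix.fromBlocks_multiply, ← Matrix.fromBlocks_one]

namespace Matrix

variable {m n α : Type*} [Fintype m] [Fintype n] [DecidableEq m] [DecidableEq n] [CommRing α]

/-- Both inverses are junk `0` exactly when one of them is, by the Weinstein–Aronszajn identity,
so no invertibility hypothesis is needed. -/
theorem mul_inv_one_add_mul_comm (Y : Matrix m n α) (Z : Matrix n m α) :
    Y * (1 + Z * Y)⁻¹ = (1 + Y * Z)⁻¹ * Y := by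
  by_cases hdet : IsUnit (1 + Z * Y).det
  · have hdet' : IsUnit (1 + Y * Z).det := by rwa [det_one_add_mul_comm]
    have hswap : (1 + Y * Z) * Y = Y * (1 + Z * Y) := by
      simp only [Matrix.add_mul, Matrix.mul_add, Matrix.one_mul, Matrix.mul_one, Matrix.mul_assoc]
    calc Y * (1 + Z * Y)⁻¹ = (1 + Y * Z)⁻¹ * ((1 + Y * Z) * Y) * (1 + Z * Y)⁻¹ := by
          rw [nonsing_inv_mul_cancel_left _ _ hdet']
      _ = (1 + Y * Z)⁻¹ * Y := by
          rw [hswap, ← Matrix.mul_assoc, mul_nonsing_inv_cancel_right _ _ hdet]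
  · have hdet' : ¬IsUnit (1 + Y * Z).det := by rwa [det_one_add_mul_comm]
    rw [nonsing_inv_apply_not_isUnit _ hdet, nonsing_inv_apply_not_isUnit _ hdet',
      Matrix.mul_zero, Matrix.zero_mul]

/-- The square-root iteration step uses `stepFactor 3 8`. -/
noncomputable def stepFactor (a b : α) (A : Matrix n n α) : Matrix n n α :=
  1 + b • (1 + a • A)⁻¹

theorem mul_stepFactor_comm (a b : α) (Y : Matrix m n α) (Z : Matrix n m α) :
    Y * stepFactor a b (Z * Y) = stepFactor a b (Y * Z) * Y := by
  have h := mul_inv_one_add_mul_comm Y (a • Z)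
  rw [Matrix.smul_mul, Matrix.mul_smul] at h
  simp only [stepFactor, Matrix.mul_add, Matrix.add_mul, Matrix.mul_one, Matrix.one_mul,
    Matrix.mul_smul, Matrix.smul_mul, h]

theorem conjTranspose_stepFactor [StarRing α] {a b : α} (ha : star a = a) (hb : star b = b)
    (A : Matrix n n α) : (stepFactor a b A)ᴴ = stepFactor a b Aᴴ := by
  simp only [stepFactor, conjTranspose_add, conjTranspose_one, conjTranspose_smul,
    conjTranspose_nonsing_inv, ha, hb]

theorem conj_stepFactor_of_mul_self_eq_one {G : Matrix n n α} (hG : G * G = 1) (a b : α)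
    (A : Matrix n n α) : G * stepFactor a b A * G = stepFactor a b (G * A * G) := by
  have hconj_inv : G * (1 + a • A)⁻¹ * G = (G * (1 + a • A) * G)⁻¹ := by
    rw [Matrix.mul_inv_rev, Matrix.mul_inv_rev, inv_eq_left_inv hG, Matrix.mul_assoc]
  simp only [stepFactor, Matrix.mul_add, Matrix.add_mul, Matrix.mul_one, mul_smul_comm,
    smul_mul_assoc, hG, hconj_inv]

theorem conj_smul_mul_stepFactor [StarRing α] {G Y Z : Matrix n n α} (hG : G * G = 1)
    (hY : G * Y * G = Yᴴ) (hZ : G * Z * G = Zᴴ) {a b c : α} (ha : star a = a) (hb : star b = b)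
    (hc : star c = c) :
    G * (c • (Y * stepFactor a b (Z * Y))) * G = (c • (Y * stepFactor a b (Z * Y)))ᴴ := by
  have hconj_mul : Yᴴ * Zᴴ = G * (Y * Z) * G := by
    rw [← hY, ← hZ]
    simp only [Matrix.mul_assoc, ← Matrix.mul_assoc G G, hG, Matrix.one_mul]
  calc G * (c • (Y * stepFactor a b (Z * Y))) * G
      = c • ((G * stepFactor a b (Y * Z) * G) * (G * Y * G)) := by
        rw [mul_stepFactor_comm]
        simp only [mul_smul_comm, smul_mul_assoc, Matrix.mul_assoc, ← Matrix.mul_assoc G G, hG,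
          Matrix.one_mul]
    _ = (c • (Y * stepFactor a b (Z * Y)))ᴴ := by
        rw [conj_stepFactor_of_mul_self_eq_one hG, hY, ← hconj_mul, conjTranspose_smul,
          conjTranspose_mul, conjTranspose_stepFactor ha hb, conjTranspose_mul, hc]

end Matrix

theorem iteration_step_preserves_chiral_general
    (m : ℕ) (Y Z : Matrix (Fin m ⊕ Fin m) (Fin m ⊕ Fin m) ℂ)
    (Y' Z' : Matrix (Fin m ⊕ Fin m) (Fin m ⊕ Fin m) ℂ)
    (hY' : Y' = (3 : ℂ)⁻¹ • (Y * (1 + (8 : ℂ) • (1 + (3 : ℂ) • (Z * Y))⁻¹)))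
    (hZ' : Z' = (3 : ℂ)⁻¹ • ((1 + (8 : ℂ) • (1 + (3 : ℂ) • (Z * Y))⁻¹) * Z))
    (hYc : Gamma m * Y * Gamma m = Yᴴ) (hZc : Gamma m * Z * Gamma m = Zᴴ) :
    Gamma m * Y' * Gamma m = Y'ᴴ ∧ Gamma m * Z' * Gamma m = Z'ᴴ := by
  have h3 : star (3 : ℂ) = 3 := by simp
  have h8 : star (8 : ℂ) = 8 := by simp
  have h3inv : star (3 : ℂ)⁻¹ = (3 : ℂ)⁻¹ := by simp
  change Y' = (3 : ℂ)⁻¹ • (Y * stepFactor 3 8 (Z * Y)) at hY'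
  change Z' = (3 : ℂ)⁻¹ • (stepFactor 3 8 (Z * Y) * Z) at hZ'
  rw [← mul_stepFactor_comm] at hZ'
  subst hY' hZ'
  exact ⟨conj_smul_mul_stepFactor (Gamma_mul_Gamma m) hYc hZc h3 h8 h3inv,
    conj_smul_mul_stepFactor (Gamma_mul_Gamma m) hZc hYc h3 h8 h3inv⟩

/-- The square-root iteration step
`Y' = (1/3) Y (I + 8 (I + 3ZY)⁻¹)`, `Z' = (1/3) (I + 8 (I + 3ZY)⁻¹) Z`
preserves the chiral symmetry `Γ X Γ = Xᴴ`. -/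
theorem iteration_step_preserves_chiral
    (m : ℕ) (Y Z : Matrix (Fin m ⊕ Fin m) (Fin m ⊕ Fin m) ℂ)
    (hinv : IsUnit (1 + (3 : ℂ) • (Z * Y)))
    (Y' Z' : Matrix (Fin m ⊕ Fin m) (Fin m ⊕ Fin m) ℂ)
    (hY' : Y' = (3 : ℂ)⁻¹ • (Y * (1 + (8 : ℂ) • (1 + (3 : ℂ) • (Z * Y))⁻¹)))
    (hZ' : Z' = (3 : ℂ)⁻¹ • ((1 + (8 : ℂ) • (1 + (3 : ℂ) • (Z * Y))⁻¹) * Z))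
    (hYc : Gamma m * Y * Gamma m = Yᴴ) (hZc : Gamma m * Z * Gamma m = Zᴴ) :
    Gamma m * Y' * Gamma m = Y'ᴴ ∧ Gamma m * Z' * Gamma m = Z'ᴴ :=
  iteration_step_preserves_chiral_general m Y Z Y' Z' hY' hZ' hYc hZc
end

section
/- Let N = 2m and let Γ be the N-by-N block matrix diag(I_m, -I_m). Suppose U is an N-by-N unitary matrix with Γ U Γ = U†. If there exists a Hermitian matrix H with Γ H = -H Γ and exp(-iH) = U, then sig(UΓ) = 0. -/
/-!
Put `B = -(i/2) H`. Since `B` anticommutes with `Γ`, the exponential satisfies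
`exp B * Γ * exp B = Γ`, so `U Γ = exp B * (exp B * Γ)` has the same characteristic polynomial
as `(exp B * Γ) * exp B = Γ`. The eigenvalues of `Γ` are `1` and `-1`, each `m` times.
-/

open Matrix

/-- The signature of a matrix: the number of eigenvalues (roots of the characteristic
polynomial, with multiplicity) with positive real part minus the number with negative real
part.  For an invertible Hermitian matrix this is the usual signature. -/
noncomputable def sig {n : Type*} [Fintype n] [DecidableEq n]
    (X : Matrix n n ℂ) : ℤ :=
  ((X.charpoly.roots.filter fun z => 0 < z.re).card : ℤ) -
    ((X.charpoly.roots.filter fun z => z.re < 0).card : ℤ)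

namespace Matrix

variable {n : Type*} [Fintype n] [DecidableEq n]

theorem exp_mul_mul_exp_of_semiconjBy_neg {𝔸 : Type*} [NormedRing 𝔸] [NormedAlgebra ℚ 𝔸]
    [CompleteSpace 𝔸] {G A : Matrix n n 𝔸} (h : SemiconjBy G A (-A)) :
    NormedSpace.exp A * G * NormedSpace.exp A = G := by
  open scoped Norms.Operator in
  -- The completeness instance has to be given by hand: instance search does not see through
  -- the uniform structure induced by the operator norm.
  have := @SemiconjBy.exp_neg_mul_mul_exp_eq_self (Matrix n n 𝔸) _ _
    (Matrix.instCompleteSpace n n 𝔸) G A (-A) h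
  rw [neg_neg] at this
  exact this

theorem charpoly_exp_mul_of_semiconjBy_neg {𝔸 : Type*} [NormedCommRing 𝔸] [NormedAlgebra ℚ 𝔸]
    [CompleteSpace 𝔸] {G A : Matrix n n 𝔸} (h : SemiconjBy G A (-A)) :
    (NormedSpace.exp A * G).charpoly = G.charpoly := by
  set B := (2⁻¹ : ℚ) • A
  have hA : A = B + B := by rw [← add_smul]; norm_num
  have hB : SemiconjBy G B (-B) := by rw [← smul_neg]; exact h.smul_right _
  rw [hA, exp_add_of_commute B B (Commute.refl B), mul_assoc, charpoly_mul_comm,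
    exp_mul_mul_exp_of_semiconjBy_neg hB]

end Matrix

open Polynomial in
theorem charpoly_Gamma (m : ℕ) : (Gamma m).charpoly = (X - C 1) ^ m * (X - C (-1)) ^ m := by
  have hneg : (-1 : Matrix (Fin m) (Fin m) ℂ) = diagonal fun _ => -1 := by
    rw [← diagonal_one, diagonal_neg]
  rw [Gamma, charpoly_fromBlocks_zero₁₂, charpoly_one, hneg, charpoly_diagonal, Finset.prod_const,
    Finset.card_univ, Fintype.card_fin, C_1]

open Polynomial in
theorem roots_charpoly_Gamma (m : ℕ) :
    (Gamma m).charpoly.roots = Multiset.replicate m 1 + Multiset.replicate m (-1) := by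
  rw [charpoly_Gamma, roots_mul, roots_pow, roots_pow, roots_X_sub_C, roots_X_sub_C,
    Multiset.nsmul_singleton, Multiset.nsmul_singleton]
  exact (((monic_X_sub_C _).pow m).mul ((monic_X_sub_C _).pow m)).ne_zero

theorem sig_Gamma (m : ℕ) : sig (Gamma m) = 0 := by
  simp [sig, roots_charpoly_Gamma, Multiset.filter_add, Multiset.filter_eq_self.2,
    Multiset.filter_eq_nil.2, Multiset.mem_replicate]

theorem chiral_log_exists_implies_sig_zero_general
    (m : ℕ) (U : Matrix (Fin m ⊕ Fin m) (Fin m ⊕ Fin m) ℂ)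
    (H : Matrix (Fin m ⊕ Fin m) (Fin m ⊕ Fin m) ℂ)
    (hanti : Gamma m * H = -(H * Gamma m))
    (hexp : NormedSpace.exp (-(Complex.I • H)) = U) :
    sig (U * Gamma m) = 0 := by
  have hH : SemiconjBy (Gamma m) H (-H) := by rw [SemiconjBy, hanti, neg_mul]
  have hsemi : SemiconjBy (Gamma m) (-(Complex.I • H)) (-(-(Complex.I • H))) := by
    simpa only [smul_neg] using (hH.smul_right Complex.I).neg_right
  have hcharpoly : (U * Gamma m).charpoly = (Gamma m).charpoly := by
    rw [← hexp]
    exact charpoly_exp_mul_of_semiconjBy_neg hsemi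
  calc sig (U * Gamma m) = sig (Gamma m) := by simp only [sig, hcharpoly]
    _ = 0 := sig_Gamma m

/-- If `U` is unitary with `Γ U Γ = Uᴴ` and there is a Hermitian `H` with
`Γ H = -H Γ` and `exp(-iH) = U`, then `sig (UΓ) = 0`. -/
theorem chiral_log_exists_implies_sig_zero
    (m : ℕ) (U : Matrix (Fin m ⊕ Fin m) (Fin m ⊕ Fin m) ℂ)
    (hU : Uᴴ * U = 1) (hchiral : Gamma m * U * Gamma m = Uᴴ)
    (H : Matrix (Fin m ⊕ Fin m) (Fin m ⊕ Fin m) ℂ)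
    (hHerm : Hᴴ = H) (hanti : Gamma m * H = -(H * Gamma m))
    (hexp : NormedSpace.exp (-(Complex.I • H)) = U) :
    sig (U * Gamma m) = 0 :=
  chiral_log_exists_implies_sig_zero_general m U H hanti hexp
end

section
/- Let U be an n-by-n complex unitary matrix that is complex symmetric, i.e. Uᵀ = U. Then there exists an n-by-n real symmetric matrix H (Hᵀ = H with all entries real) such that exp(iH) = U, where H is regarded as a complex matrix. -/
/-! Let `Θ = arg U` via the continuous functional calculus; `arg` is continuous on the spectrum
of any matrix since that spectrum is finite, and `exp (i Θ) = U` because the spectrum of a unitary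
lies on the unit circle. `Θ` is self-adjoint since `arg` is real-valued, and symmetric since on a
finite spectrum the functional calculus is given by a polynomial (Lagrange interpolation) and
`Uᵀ = U`. A Hermitian symmetric complex matrix has real entries, so `Θ` is the real symmetric `H`. -/

open Matrix Complex Polynomial NormedSpace
open scoped Matrix.Norms.L2Operator

section FiniteSpectrum

variable {R A : Type*} {p : A → Prop} [Field R] [StarRing R] [MetricSpace R]
  [IsTopologicalRing R] [ContinuousStar R] [TopologicalSpace A] [Ring A] [StarRing A]
  [Algebra R A] [ContinuousFunctionalCalculus R A p]

theorem exists_cfc_eq_aeval_of_finite_spectrum {a : A} (ha : (spectrum R a).Finite)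
    (f : R → R) : ∃ q : R[X], cfc f a = aeval a q := by
  classical
  by_cases hpa : p a
  · refine ⟨Lagrange.interpolate ha.toFinset id f, ?_⟩
    rw [← cfc_polynomial _ a]
    exact cfc_congr fun x hx ↦
      (Lagrange.eval_interpolate_at_node _ (Set.injOn_id _) (ha.mem_toFinset.2 hx)).symm
  · exact ⟨0, by simp [cfc_apply_of_not_predicate a hpa]⟩

end FiniteSpectrum

theorem exp_I_smul_cfc_arg {A : Type*} [CStarAlgebra A] {u : A} (hu : u ∈ unitary A)
    (harg : ContinuousOn arg (spectrum ℂ u)) :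
    exp (I • cfc (ofReal ∘ arg : ℂ → ℂ) u) = u := by
  rw [← CFC.exp_eq_normedSpace_exp (𝕜 := ℂ), ← cfc_comp_smul .., ← cfc_comp' ..]
  conv_rhs => rw [← cfc_id' ℂ u]
  refine cfc_congr fun y hy ↦ ?_
  have hy₁ : ‖y‖ = 1 := spectrum.norm_eq_one_of_unitary hu hy
  have hlog : I * y.arg = log y := Complex.ext (by simp [log_re, hy₁]) (by simp [log_im])
  simpa [← exp_eq_exp_ℂ, hlog] using exp_log (by aesop)

namespace Matrix

variable {n : Type*}

theorem map_re_map_ofReal {A : Matrix n n ℂ} (hH : A.IsHermitian) (hS : A.IsSymm) :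
    (A.map re).map ofReal = A := by
  ext i j
  have hconj : star (A i j) = A i j := hS.apply i j ▸ hH.apply i j
  simpa using Complex.conj_eq_iff_re.mp hconj

variable [Fintype n] [DecidableEq n]

theorem IsSymm.aeval {R α : Type*} [CommSemiring R] [CommSemiring α] [Algebra R α]
    {A : Matrix n n α} (hA : A.IsSymm) (q : R[X]) : (aeval A q).IsSymm := by
  induction q using Polynomial.induction_on' with
  | add p q hp hq => simpa using hp.add hq
  | monomial k a => simpa [aeval_monomial, ← Algebra.smul_def] using (hA.pow k).smul a

theorem IsSymm.cfc {A : Matrix n n ℂ} (hA : A.IsSymm) (f : ℂ → ℂ) : (cfc f A).IsSymm := by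
  obtain ⟨q, hq⟩ := exists_cfc_eq_aeval_of_finite_spectrum (finite_spectrum A) f
  exact hq ▸ hA.aeval q

end Matrix

/-- Every complex symmetric unitary matrix `U` has a logarithm of the form
`iH` with `H` real symmetric: `exp(iH) = U`. -/
theorem symmetric_unitary_has_real_symmetric_log
    (n : ℕ) (U : Matrix (Fin n) (Fin n) ℂ)
    (hU : Uᴴ * U = 1) (hsymm : Uᵀ = U) :
    ∃ H : Matrix (Fin n) (Fin n) ℝ, Hᵀ = H ∧
      NormedSpace.exp (Complex.I • H.map (fun x : ℝ => (x : ℂ))) = U := by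
  have hUu : U ∈ unitary (Matrix (Fin n) (Fin n) ℂ) := ⟨hU, mul_eq_one_comm.mp hU⟩
  set Θ := cfc (ofReal ∘ arg : ℂ → ℂ) U
  have hΘ : Θ.IsSymm := IsSymm.cfc hsymm _
  refine ⟨Θ.map re, hΘ.map re, ?_⟩
  rw [map_re_map_ofReal (IsSelfAdjoint.cfc_arg U) hΘ]
  exact exp_I_smul_cfc_arg hUu ((finite_spectrum U).continuousOn _)
end
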